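/- Let x ∈ ℝⁿ with f(x) ≠ 0 and suppose the flow S_t x is defined and f(S_t x) ≠ 0 for all t ≥ 0. Let M be a C¹ function on a neighborhood of the forward orbit of x with values in the symmetric n×n matrices, and set φ₀(t) := f(S_t x)/‖f(S_t x)‖². Then for all t ≥ 0: d/dt [φ₀(t)^T M(S_t x) φ₀(t)] = φ₀(t)^T (LM(S_t x)) φ₀(t). -/

import Mathlib

/-!
Write `u = f ∘ S_· x` and `N = u ⬝ᵥ u`, so that `φ₀ᵀ M φ₀ = N⁻¹ (N⁻¹ (uᵀ M u))`. Along the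
trajectory `u' = Df u` and the entries of `M ∘ S_· x` have derivative `M′`, so the product rule
applies. The terms `Dfᵀ M + M Df` of `LM` come from differentiating the two factors `u`, and the two
correction terms from differentiating the two factors `N⁻¹`, because `uᵀ (Df + Dfᵀ) u = N'`.
-/

open Matrix Set Filter MeasureTheory

/-- Euclidean norm of a vector in `ℝⁿ`. -/
noncomputable def enormR {n : ℕ} (v : Fin n → ℝ) : ℝ := Real.sqrt (∑ i, v i ^ 2)

/-- Operator norm of a matrix induced by the Euclidean norm. -/
noncomputable def opn {n : ℕ} (A : Matrix (Fin n) (Fin n) ℝ) : ℝ :=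
  ‖Matrix.toEuclideanCLM (𝕜 := ℝ) A‖

/-- The projection `P_x = I - f(x)f(x)ᵀ/‖f(x)‖²` onto the hyperplane perpendicular to `f(x)`. -/
noncomputable def Pm {n : ℕ} (f : (Fin n → ℝ) → Fin n → ℝ) (x : Fin n → ℝ) :
    Matrix (Fin n) (Fin n) ℝ :=
  1 - (enormR (f x) ^ 2)⁻¹ • Matrix.vecMulVec (f x) (f x)

/-- The differential operator
`LM(x) = M′(x) + Df(x)ᵀM(x) + M(x)Df(x) - M(x)f(x)f(x)ᵀ(Df(x)+Df(x)ᵀ)/‖f(x)‖²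
  - (Df(x)+Df(x)ᵀ)f(x)f(x)ᵀM(x)/‖f(x)‖²`,
where the orbital derivative `M′(x)` has entries `∇M_ij(x) ⋅ f(x)`. -/
noncomputable def LMop {n : ℕ} (f : (Fin n → ℝ) → Fin n → ℝ)
    (Df M : (Fin n → ℝ) → Matrix (Fin n) (Fin n) ℝ) (x : Fin n → ℝ) :
    Matrix (Fin n) (Fin n) ℝ :=
  (Matrix.of fun i j => fderiv ℝ (fun y => M y i j) x (f x))
    + (Df x)ᵀ * M x + M x * Df x
    - (enormR (f x) ^ 2)⁻¹ • (M x * Matrix.vecMulVec (f x) (f x) * (Df x + (Df x)ᵀ))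
    - (enormR (f x) ^ 2)⁻¹ • ((Df x + (Df x)ᵀ) * Matrix.vecMulVec (f x) (f x) * M x)

section DotProductDeriv

variable {𝕜 : Type*} [NontriviallyNormedField 𝕜] {ι : Type*} [Fintype ι]
  {u v : 𝕜 → ι → 𝕜} {u' v' : ι → 𝕜} {A : 𝕜 → Matrix ι ι 𝕜} {A' : Matrix ι ι 𝕜}
  {s : Set 𝕜} {t : 𝕜}

theorem HasDerivWithinAt.dotProduct (hu : HasDerivWithinAt u u' s t)
    (hv : HasDerivWithinAt v v' s t) :
    HasDerivWithinAt (fun τ => u τ ⬝ᵥ v τ) (u' ⬝ᵥ v t + u t ⬝ᵥ v') s t := by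
  have hsum := HasDerivWithinAt.fun_sum (u := Finset.univ) fun i _ =>
    (hasDerivWithinAt_pi.mp hu i).fun_mul (hasDerivWithinAt_pi.mp hv i)
  rw [Finset.sum_add_distrib] at hsum
  exact hsum

theorem HasDerivWithinAt.mulVec (hA : ∀ i j, HasDerivWithinAt (fun τ => A τ i j) (A' i j) s t)
    (hv : HasDerivWithinAt v v' s t) :
    HasDerivWithinAt (fun τ => A τ *ᵥ v τ) (A' *ᵥ v t + A t *ᵥ v') s t :=
  hasDerivWithinAt_pi.mpr fun i => (hasDerivWithinAt_pi.mpr (hA i)).dotProduct hv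

theorem HasDerivWithinAt.dotProduct_mulVec (hu : HasDerivWithinAt u u' s t)
    (hA : ∀ i j, HasDerivWithinAt (fun τ => A τ i j) (A' i j) s t)
    (hv : HasDerivWithinAt v v' s t) :
    HasDerivWithinAt (fun τ => u τ ⬝ᵥ A τ *ᵥ v τ)
      (u' ⬝ᵥ A t *ᵥ v t + u t ⬝ᵥ A' *ᵥ v t + u t ⬝ᵥ A t *ᵥ v') s t := by
  simpa only [dotProduct_add, add_assoc] using hu.dotProduct (hv.mulVec hA)

end DotProductDeriv

theorem smul_dotProduct_mulVec_smul {R ι : Type*} [CommRing R] [Fintype ι] (c : R) (v : ι → R)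
    (A : Matrix ι ι R) : (c • v) ⬝ᵥ A *ᵥ (c • v) = c * (c * (v ⬝ᵥ A *ᵥ v)) := by
  simp only [mulVec_smul, dotProduct_smul, smul_dotProduct, smul_eq_mul]

theorem enormR_sq {n : ℕ} (v : Fin n → ℝ) : enormR v ^ 2 = v ⬝ᵥ v := by
  rw [enormR, Real.sq_sqrt (Finset.sum_nonneg fun i _ => sq_nonneg (v i))]
  simp only [dotProduct, sq]

noncomputable def orbitalDeriv {n : ℕ} (f : (Fin n → ℝ) → Fin n → ℝ)
    (M : (Fin n → ℝ) → Matrix (Fin n) (Fin n) ℝ) (y : Fin n → ℝ) : Matrix (Fin n) (Fin n) ℝ :=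
  Matrix.of fun i j => fderiv ℝ (fun z => M z i j) y (f y)

theorem dotProduct_LMop_mulVec_self {n : ℕ} (f : (Fin n → ℝ) → Fin n → ℝ)
    (Df M : (Fin n → ℝ) → Matrix (Fin n) (Fin n) ℝ) (y : Fin n → ℝ) :
    f y ⬝ᵥ LMop f Df M y *ᵥ f y =
      (Df y *ᵥ f y) ⬝ᵥ M y *ᵥ f y + f y ⬝ᵥ orbitalDeriv f M y *ᵥ f y
        + f y ⬝ᵥ M y *ᵥ (Df y *ᵥ f y)
        - 4 * (f y ⬝ᵥ f y)⁻¹ * (f y ⬝ᵥ Df y *ᵥ f y) * (f y ⬝ᵥ M y *ᵥ f y) := by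
  have htr : ∀ w, f y ⬝ᵥ (Df y)ᵀ *ᵥ w = (Df y *ᵥ f y) ⬝ᵥ w := fun w => by
    rw [dotProduct_mulVec, vecMul_transpose]
  have hcomm : (Df y *ᵥ f y) ⬝ᵥ f y = f y ⬝ᵥ Df y *ᵥ f y := dotProduct_comm _ _
  simp only [LMop, orbitalDeriv, enormR_sq, sub_mulVec, add_mulVec, smul_mulVec,
    ← mulVec_mulVec, vecMulVec_mulVec, op_smul_eq_smul, mulVec_smul, mulVec_add,
    dotProduct_sub, dotProduct_add, dotProduct_smul, smul_eq_mul, htr, hcomm]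
  ring

theorem stmt9_general {n : ℕ} (f : (Fin n → ℝ) → Fin n → ℝ)
    (Df : (Fin n → ℝ) → Matrix (Fin n) (Fin n) ℝ)
    (hDf : ∀ y, HasFDerivAt f (LinearMap.toContinuousLinearMap ((Df y).mulVecLin)) y)
    -- `g t = S_t x` is the forward trajectory through `x`
    (g : ℝ → Fin n → ℝ)
    (hg : ∀ t ≥ (0:ℝ), HasDerivWithinAt g (f (g t)) (Set.Ici 0) t)
    (hfg : ∀ t ≥ (0:ℝ), f (g t) ≠ 0)
    -- `M` is C¹ and symmetric-matrix-valued on an open neighborhood of the forward orbit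
    (V : Set (Fin n → ℝ)) (hV : IsOpen V) (hgV : ∀ t ≥ (0:ℝ), g t ∈ V)
    (M : (Fin n → ℝ) → Matrix (Fin n) (Fin n) ℝ)
    (hM : ∀ i j, ContDiffOn ℝ 1 (fun y => M y i j) V)
    -- `φ₀ t = f(S_t x)/‖f(S_t x)‖²`
    (φ₀ : ℝ → Fin n → ℝ) (hφ₀ : ∀ t, φ₀ t = (enormR (f (g t)) ^ 2)⁻¹ • f (g t)) :
    ∀ t ≥ (0:ℝ),
      HasDerivWithinAt
        (fun τ => φ₀ τ ⬝ᵥ (M (g τ)).mulVec (φ₀ τ))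
        (φ₀ t ⬝ᵥ (LMop f Df M (g t)).mulVec (φ₀ t))
        (Set.Ici 0) t := by
  intro t ht
  have hφ : ∀ τ, φ₀ τ = (f (g τ) ⬝ᵥ f (g τ))⁻¹ • f (g τ) := fun τ => by rw [hφ₀, enormR_sq]
  have hu : HasDerivWithinAt (fun τ => f (g τ)) (Df (g t) *ᵥ f (g t)) (Ici 0) t :=
    (hDf (g t)).comp_hasDerivWithinAt t (hg t ht)
  have hMg : ∀ i j, HasDerivWithinAt (fun τ => M (g τ) i j) (orbitalDeriv f M (g t) i j)
      (Ici 0) t := fun i j =>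
    (((hM i j).contDiffAt (hV.mem_nhds (hgV t ht))).differentiableAt one_ne_zero).hasFDerivAt
      |>.comp_hasDerivWithinAt t (hg t ht)
  have hN0 : f (g t) ⬝ᵥ f (g t) ≠ 0 := dotProduct_self_eq_zero.not.mpr (hfg t ht)
  have hNinv := (hu.dotProduct hu).inv hN0
  simp only [hφ, smul_dotProduct_mulVec_smul]
  refine (hNinv.fun_mul (hNinv.fun_mul (hu.dotProduct_mulVec hMg hu))).congr_deriv ?_
  rw [dotProduct_LMop_mulVec_self, dotProduct_comm (Df (g t) *ᵥ f (g t)) (f (g t)), Pi.inv_apply]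
  field_simp
  ring

/-- Lemma 4.1, equation (4.2): with `φ₀(t) = f(S_t x)/‖f(S_t x)‖²`,
`d/dt [φ₀(t)ᵀ M(S_t x) φ₀(t)] = φ₀(t)ᵀ (LM(S_t x)) φ₀(t)`. -/
theorem stmt9 {n : ℕ} (f : (Fin n → ℝ) → Fin n → ℝ)
    (Df : (Fin n → ℝ) → Matrix (Fin n) (Fin n) ℝ)
    (hf : ContDiff ℝ 1 f)
    (hDf : ∀ y, HasFDerivAt f (LinearMap.toContinuousLinearMap ((Df y).mulVecLin)) y)
    (x : Fin n → ℝ) (hfx : f x ≠ 0)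
    -- `g t = S_t x` is the forward trajectory through `x`
    (g : ℝ → Fin n → ℝ) (hg0 : g 0 = x)
    (hg : ∀ t ≥ (0:ℝ), HasDerivWithinAt g (f (g t)) (Set.Ici 0) t)
    (hfg : ∀ t ≥ (0:ℝ), f (g t) ≠ 0)
    -- `M` is C¹ and symmetric-matrix-valued on an open neighborhood of the forward orbit
    (V : Set (Fin n → ℝ)) (hV : IsOpen V) (hgV : ∀ t ≥ (0:ℝ), g t ∈ V)
    (M : (Fin n → ℝ) → Matrix (Fin n) (Fin n) ℝ)
    (hM : ∀ i j, ContDiffOn ℝ 1 (fun y => M y i j) V)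
    (hMsym : ∀ y ∈ V, (M y)ᵀ = M y)
    -- `φ₀ t = f(S_t x)/‖f(S_t x)‖²`
    (φ₀ : ℝ → Fin n → ℝ) (hφ₀ : ∀ t, φ₀ t = (enormR (f (g t)) ^ 2)⁻¹ • f (g t)) :
    ∀ t ≥ (0:ℝ),
      HasDerivWithinAt
        (fun τ => φ₀ τ ⬝ᵥ (M (g τ)).mulVec (φ₀ τ))
        (φ₀ t ⬝ᵥ (LMop f Df M (g t)).mulVec (φ₀ t))
        (Set.Ici 0) t :=
  stmt9_general f Df hDf g hg hfg V hV hgV M hM φ₀ hφ₀
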